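/- arXiv:1402.2367 — 2 statements merged into one kernel-verified Lean document; each statement's English description precedes it below -/
import Mathlib

section
/- The sequence of total sums of Lah numbers 𝓛_n = ∑_{k=1}^{n} L(n,k) is convex: for every integer n ≥ 1, 𝓛_{n+2} - 2𝓛_{n+1} + 𝓛_n ≥ 0. -/
open Finset

/-- Lah numbers: `L(n,k) = C(n-1,k-1) * n! / k!` (as a real number). -/
noncomputable def lah (n k : ℕ) : ℝ :=
  ((n - 1).choose (k - 1) : ℝ) * (Nat.factorial n) / (Nat.factorial k)

/-- The total sum of Lah numbers `𝓛_n = ∑_{k=1}^n L(n,k)`. -/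
noncomputable def lahTotal (n : ℕ) : ℝ := ∑ k ∈ Finset.Icc 1 n, lah n k

lemma lah_nonneg (n k : ℕ) : 0 ≤ lah n k := by
  unfold lah; positivity

lemma lah_eq_zero_of_lt (n k : ℕ) (hn : 1 ≤ n) (h : n < k) : lah n k = 0 := by
  unfold lah
  rw [Nat.choose_eq_zero_of_lt (by omega)]
  simp

lemma lah_step (n k : ℕ) (hk : k ≤ n + 1) :
    2 * lah (n + 1) k ≤ lah (n + 2) k := by
  unfold lah
  have h1 : (n + 1 - 1) = n := rfl
  have h2 : (n + 2 - 1) = n + 1 := rfl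
  rw [h1, h2, ← mul_div_assoc, div_le_div_iff₀ (by positivity) (by positivity)]
  have hc : n.choose (k - 1) ≤ (n + 1).choose (k - 1) :=
    Nat.choose_le_choose _ (by omega)
  have hf : (n + 2).factorial = (n + 2) * (n + 1).factorial := rfl
  have key : 2 * (n.choose (k - 1) * (n + 1).factorial) ≤
      (n + 1).choose (k - 1) * (n + 2).factorial := by
    rw [hf]
    calc 2 * (n.choose (k - 1) * (n + 1).factorial)
        ≤ (n + 2) * ((n + 1).choose (k - 1) * (n + 1).factorial) := by
          exact Nat.mul_le_mul (by omega) (Nat.mul_le_mul_right _ hc)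
      _ = (n + 1).choose (k - 1) * ((n + 2) * (n + 1).factorial) := by ring
  have kR : (2 : ℝ) * (↑(n.choose (k - 1)) * ↑(n + 1).factorial) ≤
      ↑((n + 1).choose (k - 1)) * ↑(n + 2).factorial := by exact_mod_cast key
  exact mul_le_mul_of_nonneg_right kR (by positivity)

theorem lahTotal_convex (n : ℕ) (hn : 1 ≤ n) :
    0 ≤ lahTotal (n + 2) - 2 * lahTotal (n + 1) + lahTotal n := by
  have h1 : lahTotal n = ∑ k ∈ Finset.Icc 1 (n + 2), lah n k := by
    unfold lahTotal
    refine (Finset.sum_subset (Finset.Icc_subset_Icc_right (show n ≤ n + 2 by omega)) ?_)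
    intro k hk hk'
    simp only [Finset.mem_Icc, not_and, not_le] at hk hk'
    exact lah_eq_zero_of_lt n k hn (hk' hk.1)
  have h2 : lahTotal (n + 1) = ∑ k ∈ Finset.Icc 1 (n + 2), lah (n + 1) k := by
    unfold lahTotal
    refine (Finset.sum_subset (Finset.Icc_subset_Icc_right (show n + 1 ≤ n + 2 by omega)) ?_)
    intro k hk hk'
    simp only [Finset.mem_Icc, not_and, not_le] at hk hk'
    exact lah_eq_zero_of_lt (n + 1) k (by omega) (hk' hk.1)
  rw [h1, h2]
  unfold lahTotal
  rw [Finset.mul_sum, ← Finset.sum_sub_distrib, ← Finset.sum_add_distrib]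
  apply Finset.sum_nonneg
  intro k hk
  simp only [Finset.mem_Icc] at hk
  rcases Nat.lt_or_ge (n + 1) k with h | h
  · rw [lah_eq_zero_of_lt (n + 1) k (by omega) h]
    have := lah_nonneg (n + 2) k
    have := lah_nonneg n k
    linarith
  · have := lah_step n k h
    have := lah_nonneg n k
    linarith
end

section
/- For every positive integer n and every real x > 0, the n-th derivative of the function x ↦ e^{1/x} satisfies (e^{1/x})^{(n)} = (-1)^n ∫_0^∞ (∑_{j=0}^∞ t^j/(j!(j+1)!)) t^n e^{-xt} dt. -/
open MeasureTheory Real Set Filter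
open scoped Nat Topology

/-!
Write `f(t) = ∑ tʲ / (j! (j+1)!)`. Integrating term by term against `e^{-xt}` gives
`∫₀^∞ f(t) e^{-xt} dt = ∑ x^{-(j+1)} / (j+1)! = e^{1/x} - 1` for `x > 0`. Since the coefficients
of `f` decay faster than any geometric sequence, `f(t) ≤ C_c e^{ct}` for every `c > 0`, so the
Laplace transform may be differentiated under the integral sign arbitrarily often; each
derivative multiplies the integrand by `-t`, while the constant `-1` disappears.
-/

theorem Real.integral_pow_mul_exp_neg_mul_Ioi {b : ℝ} (hb : 0 < b) (m : ℕ) :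
    ∫ t in Ioi 0, t ^ m * exp (-(b * t)) = m ! / b ^ (m + 1) := by
  have h := integral_rpow_mul_exp_neg_mul_Ioi (a := m + 1) (by positivity) hb
  simp only [add_sub_cancel_right, rpow_natCast, Gamma_nat_eq_factorial] at h
  rw [h, ← Nat.cast_add_one, rpow_natCast, div_pow, one_pow]
  ring

theorem Real.integrableOn_pow_mul_exp_neg_mul_Ioi {b : ℝ} (hb : 0 < b) (m : ℕ) :
    IntegrableOn (fun t : ℝ ↦ t ^ m * exp (-(b * t))) (Ioi 0) :=
  .of_integral_ne_zero <| by rw [integral_pow_mul_exp_neg_mul_Ioi hb]; positivity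

theorem Real.hasSum_pow_div_factorial (x : ℝ) : HasSum (fun j : ℕ ↦ x ^ j / j !) (exp x) := by
  simpa only [← Real.exp_eq_exp_ℝ] using NormedSpace.expSeries_div_hasSum_exp x

theorem Real.hasSum_pow_succ_div_factorial (x : ℝ) :
    HasSum (fun j : ℕ ↦ x ^ (j + 1) / (j + 1)!) (exp x - 1) := by
  simpa using (hasSum_nat_add_iff' 1).2 (hasSum_pow_div_factorial x)

noncomputable def laplaceMoment (g : ℝ → ℝ) (n : ℕ) (x : ℝ) : ℝ :=
  ∫ t in Ioi 0, g t * t ^ n * exp (-(x * t))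

section LaplaceMoment

variable {g : ℝ → ℝ}
  (hg : ∀ b > 0, ∀ m : ℕ, IntegrableOn (fun t ↦ g t * t ^ m * exp (-(b * t))) (Ioi 0))
include hg

theorem hasDerivAt_laplaceMoment (n : ℕ) {x : ℝ} (hx : 0 < x) :
    HasDerivAt (laplaceMoment g n) (-laplaceMoment g (n + 1) x) x := by
  have hx2 : 0 < x / 2 := half_pos hx
  have key := hasDerivAt_integral_of_dominated_loc_of_deriv_le
    (μ := volume.restrict (Ioi 0)) (s := Ioi (x / 2))
    (F' := fun y t ↦ -(g t * t ^ (n + 1) * exp (-(y * t))))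
    (bound := fun t ↦ ‖g t * t ^ (n + 1) * exp (-(x / 2 * t))‖)
    (Ioi_mem_nhds (half_lt_self hx))
    (eventually_of_mem (Ioi_mem_nhds hx) fun y hy ↦ (hg y hy n).aestronglyMeasurable)
    (hg x hx n) (hg x hx (n + 1)).aestronglyMeasurable.neg ?bound (hg _ hx2 (n + 1)).norm ?deriv
  · rw [integral_neg] at key
    exact key.2
  case bound =>
    filter_upwards [ae_restrict_mem measurableSet_Ioi] with t (ht : 0 < t) y (hy : x / 2 < y)
    simp only [norm_neg, norm_mul, norm_pow, norm_of_nonneg ht.le, norm_of_nonneg (exp_pos _).le]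
    gcongr
  case deriv =>
    filter_upwards with t y _
    exact (((hasDerivAt_mul_const t).fun_neg.exp).const_mul (g t * t ^ n)).congr_deriv (by ring)

theorem iteratedDeriv_eq_laplaceMoment {h : ℝ → ℝ} {c : ℝ}
    (hh : EqOn h (fun y ↦ laplaceMoment g 0 y + c) (Ioi 0)) {n : ℕ} (hn : 1 ≤ n) {x : ℝ}
    (hx : 0 < x) : iteratedDeriv n h x = (-1) ^ n * laplaceMoment g n x := by
  induction n, hn using Nat.le_induction generalizing x with
  | base =>
    have hh' : h =ᶠ[𝓝 x] fun y ↦ laplaceMoment g 0 y + c := eventually_of_mem (Ioi_mem_nhds hx) hh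
    rw [iteratedDeriv_one, hh'.deriv_eq, ((hasDerivAt_laplaceMoment hg 0 hx).add_const c).deriv]
    ring
  | succ n hn ih =>
    have ih' : iteratedDeriv n h =ᶠ[𝓝 x] fun y ↦ (-1) ^ n * laplaceMoment g n y :=
      eventually_of_mem (Ioi_mem_nhds hx) fun y hy ↦ ih hy
    rw [iteratedDeriv_succ, ih'.deriv_eq, ((hasDerivAt_laplaceMoment hg n hx).const_mul _).deriv]
    ring

end LaplaceMoment

-- `besselSeries t = I₁(2√t) / √t`
noncomputable def besselSeries (t : ℝ) : ℝ :=
  ∑' j : ℕ, t ^ j / ((j ! : ℝ) * (j + 1)!)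

theorem abs_besselSeries_term_le (t : ℝ) (j : ℕ) :
    |t ^ j / ((j ! : ℝ) * (j + 1)!)| ≤ |t| ^ j / j ! := by
  rw [abs_div, abs_pow, abs_of_pos (by positivity : (0 : ℝ) < j ! * (j + 1)!)]
  gcongr
  exact le_mul_of_one_le_right (by positivity) (Nat.one_le_cast.2 (Nat.factorial_pos _))

theorem summable_besselSeries_term (t : ℝ) :
    Summable fun j : ℕ ↦ t ^ j / ((j ! : ℝ) * (j + 1)!) :=
  .of_norm_bounded (Real.summable_pow_div_factorial |t|) (abs_besselSeries_term_le t)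

@[fun_prop]
theorem continuous_besselSeries : Continuous besselSeries := by
  refine continuous_iff_continuousAt.2 fun t ↦ ?_
  have hR : Icc (-(|t| + 1)) (|t| + 1) ∈ 𝓝 t :=
    Icc_mem_nhds (by linarith [neg_abs_le t]) (by linarith [le_abs_self t])
  refine (continuousOn_tsum (fun j ↦ (continuous_pow j).continuousOn.div_const _)
    (summable_besselSeries_term (|t| + 1)) fun j y hy ↦ ?_).continuousAt hR
  rw [norm_eq_abs, abs_div, abs_pow, abs_of_pos (by positivity : (0 : ℝ) < j ! * (j + 1)!)]
  gcongr
  exact abs_le.2 hy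

theorem besselSeries_nonneg {t : ℝ} (ht : 0 ≤ t) : 0 ≤ besselSeries t :=
  tsum_nonneg fun _ ↦ by positivity

theorem besselSeries_term_le {c t : ℝ} (hc : 0 < c) (ht : 0 ≤ t) (j : ℕ) :
    t ^ j / ((j ! : ℝ) * (j + 1)!) ≤ c * exp c⁻¹ * ((c * t) ^ j / j !) := by
  have h := Real.pow_div_factorial_le_exp _ (inv_nonneg.2 hc.le) (j + 1)
  calc t ^ j / ((j ! : ℝ) * (j + 1)!)
      = c * ((c * t) ^ j / j !) * (c⁻¹ ^ (j + 1) / (j + 1)!) := by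
        rw [mul_pow, pow_succ, inv_pow]
        field_simp
    _ ≤ c * ((c * t) ^ j / j !) * exp c⁻¹ := by gcongr
    _ = c * exp c⁻¹ * ((c * t) ^ j / j !) := by ring

theorem besselSeries_le {c t : ℝ} (hc : 0 < c) (ht : 0 ≤ t) :
    besselSeries t ≤ c * exp c⁻¹ * exp (c * t) := by
  rw [← ((Real.hasSum_pow_div_factorial (c * t)).mul_left (c * exp c⁻¹)).tsum_eq]
  exact (summable_besselSeries_term t).tsum_le_tsum (besselSeries_term_le hc ht)
    ((Real.hasSum_pow_div_factorial _).summable.mul_left _)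

theorem integrableOn_besselSeries_mul_pow_mul_exp {b : ℝ} (hb : 0 < b) (m : ℕ) :
    IntegrableOn (fun t ↦ besselSeries t * t ^ m * exp (-(b * t))) (Ioi 0) := by
  have hc : 0 < b / 2 := half_pos hb
  refine Integrable.mono' ((integrableOn_pow_mul_exp_neg_mul_Ioi hc m).const_mul
    (b / 2 * exp (b / 2)⁻¹)) (Continuous.aestronglyMeasurable (by fun_prop)) ?_
  filter_upwards [ae_restrict_mem measurableSet_Ioi] with t (ht : 0 < t)
  rw [norm_of_nonneg (by have := besselSeries_nonneg ht.le; positivity)]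
  calc besselSeries t * t ^ m * exp (-(b * t))
      ≤ b / 2 * exp (b / 2)⁻¹ * exp (b / 2 * t) * t ^ m * exp (-(b * t)) := by
        gcongr
        exact besselSeries_le hc ht.le
    _ = b / 2 * exp (b / 2)⁻¹ * (t ^ m * exp (-(b / 2 * t))) := by
        rw [show -(b / 2 * t) = b / 2 * t + -(b * t) by ring, exp_add]
        ring

theorem laplaceMoment_besselSeries_zero {x : ℝ} (hx : 0 < x) :
    laplaceMoment besselSeries 0 x = exp (1 / x) - 1 := by
  set F : ℕ → ℝ → ℝ := fun j t ↦ ((j ! : ℝ) * (j + 1)!)⁻¹ * (t ^ j * exp (-(x * t)))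
  have hF_int (j : ℕ) : IntegrableOn (F j) (Ioi 0) :=
    (integrableOn_pow_mul_exp_neg_mul_Ioi hx j).const_mul _
  have hF_integral (j : ℕ) : ∫ t in Ioi 0, F j t = (1 / x) ^ (j + 1) / (j + 1)! := by
    rw [integral_const_mul, integral_pow_mul_exp_neg_mul_Ioi hx, one_div, inv_pow]
    field_simp
  have hF_norm (j : ℕ) : ∫ t in Ioi 0, ‖F j t‖ = ∫ t in Ioi 0, F j t :=
    setIntegral_congr_fun measurableSet_Ioi fun t (ht : 0 < t) ↦ norm_of_nonneg (by positivity)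
  have hsum := hasSum_integral_of_summable_integral_norm hF_int
    (by simpa only [hF_norm, hF_integral] using (hasSum_pow_succ_div_factorial (1 / x)).summable)
  simp only [hF_integral] at hsum
  rw [← hsum.unique (hasSum_pow_succ_div_factorial (1 / x)), laplaceMoment]
  refine setIntegral_congr_fun measurableSet_Ioi fun t _ ↦ ?_
  simp only [F, besselSeries, pow_zero, mul_one, ← tsum_mul_right]
  congr 1 with j
  ring

theorem iteratedDeriv_exp_inv_integral_repr (n : ℕ) (hn : 1 ≤ n) (x : ℝ) (hx : 0 < x) :
    iteratedDeriv n (fun y : ℝ => Real.exp (1 / y)) x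
      = (-1 : ℝ) ^ n *
        ∫ t in Set.Ioi (0 : ℝ),
          (∑' j : ℕ, t ^ j / ((Nat.factorial j : ℝ) * (Nat.factorial (j + 1))))
            * t ^ n * Real.exp (-(x * t)) := by
  have hmoments : ∀ b > 0, ∀ m : ℕ,
      IntegrableOn (fun t ↦ besselSeries t * t ^ m * exp (-(b * t))) (Ioi 0) :=
    fun _ hb ↦ integrableOn_besselSeries_mul_pow_mul_exp hb
  have hzero : EqOn (fun y : ℝ ↦ exp (1 / y)) (fun y ↦ laplaceMoment besselSeries 0 y + 1)
      (Ioi 0) :=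
    fun y hy ↦ by simp only [laplaceMoment_besselSeries_zero hy, sub_add_cancel]
  exact iteratedDeriv_eq_laplaceMoment hmoments hzero hn hx
end
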